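/- Let W ∈ L(H) be a positive operator and A, B ∈ L(H) operators with closed range such that ker B = ker(A*W), suppose the pair (W, range A) is compatible, and let T be the shorted operator of W to range A. Then for X₀ ∈ L(H) the following conditions are equivalent: (i) (AX₀B − I)*W(AX₀B − I) = T; (ii) A*W(AX₀B − I) = 0; (iii) X₀B is a W-inverse of A, i.e. ⟨W(A(X₀B)x − x), A(X₀B)x − x⟩ ≤ ⟨W(Az − x), Az − x⟩ for all x, z ∈ H. -/

import Mathlib

open ContinuousLinearMap
open scoped ComplexInnerProductSpace

noncomputable section

variable {H : Type*} [NormedAddCommGroup H] [InnerProductSpace ℂ H] [CompleteSpace H]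

/-- `M(W,S)`: the set of operators `X` with `0 ≤ X ≤ W` (Loewner order) and `range X ⊆ S^⊥`. -/
def MSet (W : H →L[ℂ] H) (S : Submodule ℂ H) : Set (H →L[ℂ] H) :=
  {X | X.IsPositive ∧ (W - X).IsPositive ∧ LinearMap.range (↑X : H →ₗ[ℂ] H) ≤ Sᗮ}

/-- `T` is the shorted operator of `W` to `S`, i.e. the maximum of `M(W,S)` in the Loewner
order. -/
def IsShorted (W : H →L[ℂ] H) (S : Submodule ℂ H) (T : H →L[ℂ] H) : Prop :=
  T ∈ MSet W S ∧ ∀ X ∈ MSet W S, (T - X).IsPositive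

/-- The minus order: `A ⁻≤ B` iff there are bounded idempotents `P, Q` with `A = PB` and
`A* = QB*`. -/
def MinusLE (A B : H →L[ℂ] H) : Prop :=
  ∃ P Q : H →L[ℂ] H, IsIdempotentElem P ∧ IsIdempotentElem Q ∧
    A = P ∘L B ∧ adjoint A = Q ∘L adjoint B

/-- The pair `(W, N)` is compatible: there is a bounded idempotent `Q` with range `N` such that
`WQ` is selfadjoint. -/
def Compatible (W : H →L[ℂ] H) (N : Submodule ℂ H) : Prop :=
  ∃ Q : H →L[ℂ] H, IsIdempotentElem Q ∧ LinearMap.range (↑Q : H →ₗ[ℂ] H) = N ∧ IsSelfAdjoint (W ∘L Q)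

/-- `M⁻(W,S)`: operators `X` with `X ⁻≤ W`, `range X ⊆ S^⊥` and `range X* ⊆ S^⊥`. -/
def MMinusSet (W : H →L[ℂ] H) (S : Submodule ℂ H) : Set (H →L[ℂ] H) :=
  {X | MinusLE X W ∧ LinearMap.range (↑X : H →ₗ[ℂ] H) ≤ Sᗮ ∧ LinearMap.range (↑(adjoint X) : H →ₗ[ℂ] H) ≤ Sᗮ}

/-- `X₀` is a `W`-inverse of `M` in `R(C)`: for every `x`, `X₀ x` is a `W`-weighted least squares
solution of `M z = C x`. -/
def WInverseIn (W M C X₀ : H →L[ℂ] H) : Prop :=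
  ∀ x z : H, (⟪W (M (X₀ x) - C x), M (X₀ x) - C x⟫).re ≤ (⟪W (M z - C x), M z - C x⟫).re

/-- The left weighted star order `A ₋*_W≤ B`. -/
def LStarW (W A B : H →L[ℂ] H) : Prop :=
  LinearMap.range (↑B : H →ₗ[ℂ] H) = LinearMap.range (↑A : H →ₗ[ℂ] H) ⊔ LinearMap.range (↑(B - A) : H →ₗ[ℂ] H) ∧
  LinearMap.range (↑A : H →ₗ[ℂ] H) ⊓ LinearMap.range (↑(B - A) : H →ₗ[ℂ] H) = ⊥ ∧
  LinearMap.range (↑(B - A) : H →ₗ[ℂ] H) ≤ LinearMap.ker (↑(adjoint A ∘L W) : H →ₗ[ℂ] H)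

/-- The right weighted star order `A ≤*_W B`. -/
def RStarW (W A B : H →L[ℂ] H) : Prop :=
  LinearMap.range (↑(adjoint B) : H →ₗ[ℂ] H) =
    LinearMap.range (↑(adjoint A) : H →ₗ[ℂ] H) ⊔ LinearMap.range (↑(adjoint B - adjoint A) : H →ₗ[ℂ] H) ∧
  LinearMap.range (↑(adjoint A) : H →ₗ[ℂ] H) ⊓ LinearMap.range (↑(adjoint B - adjoint A) : H →ₗ[ℂ] H) = ⊥ ∧
  LinearMap.range (↑(adjoint B - adjoint A) : H →ₗ[ℂ] H) ≤ LinearMap.ker (↑(A ∘L W) : H →ₗ[ℂ] H)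

/-- The weighted star order `A *_W≤ B`. -/
def StarW (W A B : H →L[ℂ] H) : Prop :=
  LStarW W A B ∧ RStarW W A B


/-!
Write `E = A X₀ B - 1`. Factoring `W = R* R`, condition (ii) is the normal equation of the
least-squares problem `min_z ‖R (A z - x)‖`, which gives (ii) ⇔ (iii).

If (ii) holds then `E* W E = -W E` and `W - E* W E = (A X₀ B)* W (A X₀ B)`, so `E* W E` lies in
`M(W, range A)` and `E* W E ≤ T`. Conversely, since `T` annihilates `range A`,
`⟨T x, x⟩ ≤ ⟨W (x - s), x - s⟩` for every `s ∈ range A`; taking `s = A X₀ B x` gives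
`T ≤ E* W E`, and taking `s = A z` gives (i) ⇒ (iii).
-/

namespace ContinuousLinearMap

variable {W : H →L[ℂ] H}

theorem IsPositive.exists_eq_adjoint_comp_self (hW : W.IsPositive) :
    ∃ R : H →L[ℂ] H, W = adjoint R ∘L R := by
  obtain ⟨R, hR⟩ := CStarAlgebra.nonneg_iff_eq_star_mul_self.mp ((nonneg_iff_isPositive W).mpr hW)
  exact ⟨R, by rw [hR, star_eq_adjoint, mul_def]⟩

theorem IsPositive.forall_re_inner_le_iff (hW : W.IsPositive) (A : H →L[ℂ] H) (y x : H) :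
    (∀ z, (⟪W (A x - y), A x - y⟫).re ≤ (⟪W (A z - y), A z - y⟫).re) ↔
      adjoint A (W (A x - y)) = 0 := by
  obtain ⟨R, rfl⟩ := hW.exists_eq_adjoint_comp_self
  have hnorm : ∀ v, (⟪(adjoint R ∘L R) v, v⟫).re = ‖R v‖ ^ 2 := fun v =>
    (apply_norm_sq_eq_inner_adjoint_left R v).symm
  have hls := (R ∘L A).forall_norm_sub_apply_le_iff_adjoint_apply_sub_eq_zero (R y) x
  have hres : ∀ z, R (A z - y) = -(R y - (R ∘L A) z) := fun z => by simp
  simp_rw [hnorm, hres, norm_neg, pow_le_pow_iff_left₀ (norm_nonneg _) (norm_nonneg _) two_ne_zero,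
    hls, adjoint_comp, comp_apply]
  rw [map_sub R (A x) y, ← neg_sub (R (A x)), map_neg, map_neg, neg_eq_zero]

theorem le_of_forall_re_inner_le {X Y : H →L[ℂ] H} (hX : IsSelfAdjoint X) (hY : IsSelfAdjoint Y)
    (h : ∀ x, (⟪X x, x⟫).re ≤ (⟪Y x, x⟫).re) : X ≤ Y := by
  refine isPositive_def'.mpr ⟨hY.sub hX, fun x => ?_⟩
  simpa [reApplyInnerSelf, inner_sub_left] using h x

end ContinuousLinearMap

section StarRing

variable {R : Type*} [Ring R] [StarRing R] {w p : R}

theorem star_sub_one_mul_mul_sub_one_eq (h : star p * w * (p - 1) = 0) :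
    star (p - 1) * w * (p - 1) = -(w * (p - 1)) := by
  rw [star_sub, star_one, sub_mul, sub_mul, h, one_mul, zero_sub]

theorem IsSelfAdjoint.sub_star_sub_one_mul_mul_sub_one_eq (hw : IsSelfAdjoint w)
    (h : star p * w * (p - 1) = 0) : w - star (p - 1) * w * (p - 1) = star p * w * p := by
  have hp : star p * w * p = star p * w := by rwa [mul_sub, mul_one, sub_eq_zero] at h
  have hwp : w * p = star p * w * p := by
    rw [← (hw.conjugate' p).star_eq, hp, star_mul, star_star, hw.star_eq]
  rw [star_sub_one_mul_mul_sub_one_eq h, sub_neg_eq_add, mul_sub, mul_one, add_sub_cancel, hwp]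

end StarRing

omit [CompleteSpace H] in
theorem re_inner_le_of_mem_MSet {W X : H →L[ℂ] H} {S : Submodule ℂ H} (hX : X ∈ MSet W S)
    (x : H) {s : H} (hs : s ∈ S) : (⟪X x, x⟫).re ≤ (⟪W (x - s), x - s⟫).re := by
  obtain ⟨hXpos, hWX, hXS⟩ := hX
  have hXs : ∀ y, ⟪X y, s⟫ = 0 := fun y =>
    (Submodule.mem_orthogonal' S _).mp (hXS ⟨y, rfl⟩) s hs
  have hshift : ⟪X (x - s), x - s⟫ = ⟪X x, x⟫ := by
    rw [inner_sub_right, hXs, sub_zero, map_sub, inner_sub_left, hXpos.inner_left_eq_inner_right s,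
      inner_eq_zero_symm.mp (hXs x), sub_zero]
  have := hWX.re_inner_nonneg_left (x - s)
  rw [sub_apply, inner_sub_left, map_sub, hshift] at this
  exact sub_nonneg.mp this

theorem IsShorted.adjoint_comp_comp_eq {W T P : H →L[ℂ] H} {S : Submodule ℂ H}
    (hW : W.IsPositive) (hT : IsShorted W S T) (hP : P.range ≤ S)
    (hWE : (W ∘L (P - 1)).range ≤ Sᗮ) :
    adjoint (P - 1) ∘L (W ∘L (P - 1)) = T := by
  have hPWE : star P * W * (P - 1) = 0 := by
    have := hWE.trans ((Submodule.orthogonal_le hP).trans_eq P.orthogonal_range)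
    ext x
    exact this ⟨x, rfl⟩
  change star (P - 1) * W * (P - 1) = T
  have hXeq := star_sub_one_mul_mul_sub_one_eq hPWE
  have hXpos : (star (P - 1) * W * (P - 1)).IsPositive := hW.adjoint_conj _
  have hWX : star (P - 1) * W * (P - 1) ≤ W := by
    rw [le_def, hW.isSelfAdjoint.sub_star_sub_one_mul_mul_sub_one_eq hPWE]
    exact hW.adjoint_conj P
  refine le_antisymm (hT.2 _ ⟨hXpos, hWX, ?_⟩) ?_
  · rw [hXeq]
    rintro _ ⟨x, rfl⟩
    exact Submodule.neg_mem _ (hWE ⟨x, rfl⟩)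
  · refine le_of_forall_re_inner_le hT.1.1.isSelfAdjoint hXpos.isSelfAdjoint fun x => ?_
    have hres : x - P x = -((P - 1) x) := by simp
    calc (⟪T x, x⟫).re ≤ (⟪W (x - P x), x - P x⟫).re :=
          re_inner_le_of_mem_MSet hT.1 x (hP ⟨x, rfl⟩)
      _ = (⟪(star (P - 1) * W * (P - 1)) x, x⟫).re := by
        rw [hres, map_neg, inner_neg_neg, star_eq_adjoint, mul_def, mul_def, comp_apply, comp_apply,
          adjoint_inner_left]

theorem wInverseIn_one_iff {W : H →L[ℂ] H} (hW : W.IsPositive) (A X : H →L[ℂ] H) :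
    WInverseIn W A 1 X ↔ adjoint A ∘L (W ∘L (A ∘L X - 1)) = 0 := by
  simp only [WInverseIn, hW.forall_re_inner_le_iff, ContinuousLinearMap.ext_iff]
  rfl

theorem wInverseIn_one_of_adjoint_comp_comp_eq {W A X T : H →L[ℂ] H}
    (hT : T ∈ MSet W A.range) (h : adjoint (A ∘L X - 1) ∘L (W ∘L (A ∘L X - 1)) = T) :
    WInverseIn W A 1 X := by
  intro x z
  calc _ = (⟪T x, x⟫).re := by rw [← h, comp_apply, adjoint_inner_left]; rfl
    _ ≤ (⟪W (x - A z), x - A z⟫).re := re_inner_le_of_mem_MSet hT x ⟨z, rfl⟩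
    _ = _ := by rw [← neg_sub, map_neg, inner_neg_neg]; rfl

theorem stmt12_general (W A B T X₀ : H →L[ℂ] H) (hW : W.IsPositive)
    (hT : IsShorted W (LinearMap.range (↑A : H →ₗ[ℂ] H)) T) :
    [adjoint (A ∘L X₀ ∘L B - 1) ∘L (W ∘L (A ∘L X₀ ∘L B - 1)) = T,
     adjoint A ∘L (W ∘L (A ∘L X₀ ∘L B - 1)) = 0,
     WInverseIn W A 1 (X₀ ∘L B)].TFAE := by
  tfae_have 1 → 3 := wInverseIn_one_of_adjoint_comp_comp_eq hT.1
  tfae_have 3 → 2 := (wInverseIn_one_iff hW A _).mp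
  tfae_have 2 → 1 := fun h => by
    refine hT.adjoint_comp_comp_eq hW (LinearMap.range_comp_le_range _ _) ?_
    rw [A.orthogonal_range]
    rintro _ ⟨x, rfl⟩
    exact DFunLike.congr_fun h x
  tfae_finish

/-- if `(W, range A)` is compatible, then for `X₀` the conditions
(i) `(AX₀B - I)* W (AX₀B - I) = T`; (ii) `A* W (AX₀B - I) = 0`; (iii) `X₀ B` is a
`W`-inverse of `A`, are equivalent. -/
theorem stmt12 (W A B T X₀ : H →L[ℂ] H) (hW : W.IsPositive)
    (hA : IsClosed (LinearMap.range (↑A : H →ₗ[ℂ] H) : Set H)) (hB : IsClosed (LinearMap.range (↑B : H →ₗ[ℂ] H) : Set H))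
    (hker : LinearMap.ker (↑B : H →ₗ[ℂ] H) = LinearMap.ker (↑(adjoint A ∘L W) : H →ₗ[ℂ] H))
    (hcomp : Compatible W (LinearMap.range (↑A : H →ₗ[ℂ] H)))
    (hT : IsShorted W (LinearMap.range (↑A : H →ₗ[ℂ] H)) T) :
    [adjoint (A ∘L X₀ ∘L B - 1) ∘L (W ∘L (A ∘L X₀ ∘L B - 1)) = T,
     adjoint A ∘L (W ∘L (A ∘L X₀ ∘L B - 1)) = 0,
     WInverseIn W A 1 (X₀ ∘L B)].TFAE :=
  stmt12_general W A B T X₀ hW hT
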